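/- For the generalized XXZ Hamiltonian H, the conjugation by the twist operators satisfies the exact operator identity (U^tw_{±2π})† H U^tw_{±2π} − H = Σ_{j=1}^{L} Σ_{r=1}^{L/2} (J(r)/2) ( S^+_j S^-_{j+r} (e^{∓2πir/L} − 1) + S^-_j S^+_{j+r} (e^{±2πir/L} − 1) ); in particular the longitudinal couplings Δ(r) and the field h drop out. -/

import Mathlib

open scoped BigOperators Matrix
open Fin.NatCast
noncomputable section

namespace LSM

/-- Number of basis states per site: `2S+1`. -/
abbrev N (twoS : ℕ) : ℕ := twoS + 1

/-- The spin value `S` as a real number (so `2S = twoS`). -/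
def spin (twoS : ℕ) : ℝ := (twoS : ℝ) / 2

/-- The `S^z`-value of the `k`-th basis vector: `m = S - k`, `k = 0, …, 2S`. -/
def mval (twoS : ℕ) (k : Fin (N twoS)) : ℝ := spin twoS - (k : ℕ)

/-- Single-site `S^z` matrix. -/
def SzMat (twoS : ℕ) : Matrix (Fin (N twoS)) (Fin (N twoS)) ℂ :=
  Matrix.diagonal fun k => (mval twoS k : ℂ)

/-- Single-site raising operator `S^+`. -/
def SpMat (twoS : ℕ) : Matrix (Fin (N twoS)) (Fin (N twoS)) ℂ :=
  Matrix.of fun a b =>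
    if (a : ℕ) + 1 = (b : ℕ) then
      ((Real.sqrt (spin twoS * (spin twoS + 1) - mval twoS b * (mval twoS b + 1)) : ℝ) : ℂ)
    else 0

/-- Single-site lowering operator `S^-`. -/
def SmMat (twoS : ℕ) : Matrix (Fin (N twoS)) (Fin (N twoS)) ℂ :=
  Matrix.of fun a b =>
    if (a : ℕ) = (b : ℕ) + 1 then
      ((Real.sqrt (spin twoS * (spin twoS + 1) - mval twoS b * (mval twoS b - 1)) : ℝ) : ℂ)
    else 0

/-- Single-site `S^y = (S^+ - S^-)/(2i)`. -/
def SyMat (twoS : ℕ) : Matrix (Fin (N twoS)) (Fin (N twoS)) ℂ :=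
  ((2 : ℂ) * Complex.I)⁻¹ • (SpMat twoS - SmMat twoS)

/-- Single-site `S^x = (S^+ + S^-)/2`. -/
def SxMat (twoS : ℕ) : Matrix (Fin (N twoS)) (Fin (N twoS)) ℂ :=
  ((2 : ℂ))⁻¹ • (SpMat twoS + SmMat twoS)

/-- Configurations (product basis labels) of the chain of length `L`. -/
abbrev Conf (twoS L : ℕ) := Fin L → Fin (N twoS)

/-- Operators on the chain Hilbert space `⊗_{j=1}^L ℂ^{2S+1}`, as matrices in the
product basis. -/
abbrev Op (twoS L : ℕ) := Matrix (Conf twoS L) (Conf twoS L) ℂ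

/-- The single-site matrix `A` acting on the `j`-th tensor factor (identity elsewhere). -/
def site (twoS L : ℕ) (j : Fin L) (A : Matrix (Fin (N twoS)) (Fin (N twoS)) ℂ) :
    Op twoS L :=
  Matrix.of fun x y => if ∀ i, i ≠ j → x i = y i then A (x j) (y j) else 0

/-- Total `S^z`. -/
def SzT (twoS L : ℕ) : Op twoS L := ∑ j : Fin L, site twoS L j (SzMat twoS)

/-- Total `S^y`. -/
def SyT (twoS L : ℕ) : Op twoS L := ∑ j : Fin L, site twoS L j (SyMat twoS)

/-- Translation by one site: the permutation matrix with
`Utrl† A_j Utrl = A_{j+1}` for every single-site operator `A`. -/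
def Utrl (twoS L : ℕ) [NeZero L] : Op twoS L :=
  Matrix.of fun x y => if x = (fun i => y (i + 1)) then 1 else 0

/-- Site parity (space inversion `j ↦ L - j = -j (mod L)`): the permutation matrix with
`P† A_j P = A_{L-j}` for every single-site operator `A`. -/
def Pop (twoS L : ℕ) [NeZero L] : Op twoS L :=
  Matrix.of fun x y => if x = (fun i => y (-i)) then 1 else 0

/-- Link parity `P_link = P U_trl`. -/
def Plink (twoS L : ℕ) [NeZero L] : Op twoS L := Pop twoS L * Utrl twoS L

/-- The generalized XXZ Hamiltonian with periodic boundary conditions. -/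
def Ham (twoS L : ℕ) [NeZero L] (J Δ : ℕ → ℝ) (h : ℝ) : Op twoS L :=
  (∑ j : Fin L, ∑ r ∈ Finset.Icc 1 (L / 2),
      ((((J r : ℝ) : ℂ) / 2) •
        (site twoS L j (SpMat twoS) * site twoS L (j + (r : Fin L)) (SmMat twoS) +
          site twoS L j (SmMat twoS) * site twoS L (j + (r : Fin L)) (SpMat twoS)) +
      ((Δ r : ℝ) : ℂ) •
        (site twoS L j (SzMat twoS) * site twoS L (j + (r : Fin L)) (SzMat twoS)))) +
    (h : ℂ) • SzT twoS L

/-- The generator `Σ_{j=1}^{L} j (S^z_j - S)` of the (site-centered) twist. -/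
def twistGen (twoS L : ℕ) [NeZero L] : Op twoS L :=
  ∑ j ∈ Finset.Icc 1 L,
    (j : ℂ) • site twoS L ((j : ℕ) : Fin L) (SzMat twoS - ((spin twoS : ℝ) : ℂ) • 1)

/-- The twist operator `U^tw_{ε·2π} = exp(-ε (2πi/L) Σ_j j (S^z_j - S))`, `ε = ±1`. -/
def Utw (twoS L : ℕ) [NeZero L] (ε : ℝ) : Op twoS L :=
  NormedSpace.exp ((-(ε : ℂ) * ((2 * Real.pi / L : ℝ) : ℂ) * Complex.I) • twistGen twoS L)

/-- The generator `Σ_{j=1}^{L} (j - 1/2)(S^z_j - S)` of the link-centered twist. -/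
def twistGenL (twoS L : ℕ) [NeZero L] : Op twoS L :=
  ∑ j ∈ Finset.Icc 1 L,
    ((j : ℂ) - 1 / 2) • site twoS L ((j : ℕ) : Fin L) (SzMat twoS - ((spin twoS : ℝ) : ℂ) • 1)

/-- The link-centered twist operator `U^twl_{ε·2π}`, `ε = ±1`. -/
def UtwL (twoS L : ℕ) [NeZero L] (ε : ℝ) : Op twoS L :=
  NormedSpace.exp ((-(ε : ℂ) * ((2 * Real.pi / L : ℝ) : ℂ) * Complex.I) • twistGenL twoS L)

/-- The spin-reversal operator `U^y_π = exp(-iπ S^y_T)`. -/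
def Uy (twoS L : ℕ) : Op twoS L :=
  NormedSpace.exp ((-Complex.I * ((Real.pi : ℝ) : ℂ)) • SyT twoS L)

/-- The sector `V(M, q)` of simultaneous eigenvectors of `S^z_T` (eigenvalue `M`) and of
the translation `U_trl` (eigenvalue `e^{iq}`). -/
def Vsp (twoS L : ℕ) [NeZero L] (M q : ℝ) : Submodule ℂ (Conf twoS L → ℂ) :=
  Module.End.eigenspace (Matrix.mulVecLin (SzT twoS L)) ((M : ℝ) : ℂ) ⊓
    Module.End.eigenspace (Matrix.mulVecLin (Utrl twoS L)) (Complex.exp (Complex.I * q))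

/-- `E(M; q)`: the smallest eigenvalue of `H` restricted to the sector `V(M,q)`. -/
def En (twoS L : ℕ) [NeZero L] (J Δ : ℕ → ℝ) (h : ℝ) (M q : ℝ) : ℝ :=
  sInf {E : ℝ | ∃ ψ ∈ Vsp twoS L M q, ψ ≠ 0 ∧
    (Ham twoS L J Δ h).mulVec ψ = ((E : ℝ) : ℂ) • ψ}

/-- The expectation value `⟨ψ, A ψ⟩`. -/
def expVal (twoS L : ℕ) (A : Op twoS L) (ψ : Conf twoS L → ℂ) : ℂ :=
  dotProduct (star ψ) (A.mulVec ψ)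

/-- `q` belongs to the lattice `(2π/L)ℤ` of allowed wavenumbers. -/
def allowedQ (L : ℕ) (q : ℝ) : Prop := ∃ k : ℤ, q = 2 * Real.pi * k / L

end LSM

/-!
In the product basis the twist is diagonal: since `ω = e^{±2πi/L}` satisfies `ω^L = 1`, the
weight `j` of site `j` only matters modulo `L`, and `U^tw` is the product of the site rotations
`(ω^j)^(S - S^z_j)`. Conjugating by a diagonal unitary `diag u` multiplies the `(x, y)` entry by
`ū(x) u(y)`. The `S^z` terms are diagonal and hence invariant, while `S^+_j S^-_{j+r}` only
connects configurations that differ by one quantum moved from site `j + r` to site `j`, where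
the phase ratio is `ω^j / ω^{j+r} = ω^{-r}`.
-/

open Matrix Finset

theorem Matrix.diagonal_mul_mul_diagonal_eq_smul {ι R : Type*} [Fintype ι] [DecidableEq ι]
    [CommSemiring R] {d e : ι → R} {A : Matrix ι ι R} {c : R}
    (h : ∀ x y, A x y ≠ 0 → d x * e y = c) : diagonal d * A * diagonal e = c • A := by
  ext x y
  rw [mul_diagonal, diagonal_mul, smul_apply, smul_eq_mul]
  by_cases hxy : A x y = 0
  · simp [hxy]
  · rw [← h x y hxy]
    ring

theorem Matrix.IsDiag.diagonal_inv_mul_mul_diagonal {ι K : Type*} [Fintype ι] [DecidableEq ι]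
    [Field K] {A : Matrix ι ι K} (hA : A.IsDiag) {d : ι → K} (hd : ∀ x, d x ≠ 0) :
    diagonal d⁻¹ * A * diagonal d = A := by
  rw [diagonal_mul_mul_diagonal_eq_smul (c := 1) fun x y hxy => ?_, one_smul]
  obtain rfl : x = y := by
    by_contra hne
    exact hxy (hA hne)
  exact inv_mul_cancel₀ (hd x)

theorem Finset.prod_Icc_one_eq_prod_range {M : Type*} [CommMonoid M] {f : ℕ → M} {L : ℕ}
    (hf : f L = f 0) : ∏ n ∈ Icc 1 L, f n = ∏ n ∈ range L, f n := by
  cases L with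
  | zero => rfl
  | succ L =>
    have hshift : ∏ n ∈ Icc 1 (L + 1), f n = ∏ n ∈ range (L + 1), f (n + 1) := by
      rw [range_eq_Ico, prod_Ico_add' f 0 (L + 1) 1]
      rfl
    rw [hshift, prod_range_succ, prod_range_succ', hf]

theorem Fin.self_ne_add_natCast {L : ℕ} [NeZero L] (j : Fin L) {r : ℕ} (hr : 0 < r)
    (hrL : r < L) : j ≠ j + (r : Fin L) := by
  intro h
  have h0 := congrArg Fin.val (left_eq_add.mp h)
  rw [Fin.val_natCast, Nat.mod_eq_of_lt hrL, Fin.val_zero] at h0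
  omega

theorem pow_val_add_natCast {M : Type*} [Monoid M] {L : ℕ} [NeZero L] {ω : M} (hω : ω ^ L = 1)
    (j : Fin L) (r : ℕ) : ω ^ ((j + (r : Fin L) : Fin L) : ℕ) = ω ^ (j : ℕ) * ω ^ r := by
  rw [Fin.val_add, ← pow_eq_pow_mod _ hω, pow_add, Fin.val_natCast, ← pow_eq_pow_mod _ hω]

namespace LSM

variable {twoS L : ℕ}

theorem site_diagonal (j : Fin L) (v : Fin (N twoS) → ℂ) :
    site twoS L j (diagonal v) = diagonal fun x => v (x j) := by
  ext x y
  by_cases hxy : x = y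
  · subst hxy
    simp [site]
  · rw [diagonal_apply_ne _ hxy]
    simp only [site, of_apply]
    split_ifs with hoff
    · refine diagonal_apply_ne _ fun hj => hxy (funext fun i => ?_)
      by_cases hij : i = j
      · rwa [hij]
      · exact hoff i hij
    · rfl

theorem isDiag_site_diagonal (j : Fin L) (v : Fin (N twoS) → ℂ) :
    (site twoS L j (diagonal v)).IsDiag := by
  rw [site_diagonal]
  exact isDiag_diagonal _

theorem site_mul_site_apply {j k : Fin L} (hjk : j ≠ k)
    (A B : Matrix (Fin (N twoS)) (Fin (N twoS)) ℂ) (x y : Conf twoS L) :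
    (site twoS L j A * site twoS L k B) x y =
      if ∀ i, i ≠ j → i ≠ k → x i = y i then A (x j) (y j) * B (x k) (y k) else 0 := by
  rw [mul_apply, sum_eq_single (Function.update x j (y j))]
  · by_cases hoff : ∀ i, i ≠ j → i ≠ k → x i = y i
    · have hmid : ∀ i, i ≠ k → Function.update x j (y j) i = y i := by
        intro i hik
        by_cases hij : i = j
        · rw [hij, Function.update_self]
        · rw [Function.update_of_ne hij, hoff i hij hik]
      simp only [site, of_apply, Function.update_self, Function.update_of_ne hjk.symm]
      rw [if_pos fun i hij => (Function.update_of_ne hij _ _).symm, if_pos hmid, if_pos hoff]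
    · have hmid : ¬ ∀ i, i ≠ k → Function.update x j (y j) i = y i := by
        refine fun hmid => hoff fun i hij hik => ?_
        rw [← hmid i hik, Function.update_of_ne hij]
      simp only [site, of_apply]
      rw [if_neg hmid, if_neg hoff, mul_zero]
  · intro z _ hz
    by_contra hne
    have h1 : ∀ i, i ≠ j → x i = z i := by
      by_contra hc
      exact left_ne_zero_of_mul hne (by simp only [site, of_apply, if_neg hc])
    have h2 : ∀ i, i ≠ k → z i = y i := by
      by_contra hc
      exact right_ne_zero_of_mul hne (by simp only [site, of_apply, if_neg hc])
    refine hz (funext fun i => ?_)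
    by_cases hij : i = j
    · rw [hij, Function.update_self, h2 j hjk]
    · rw [Function.update_of_ne hij, h1 i hij]
  · simp

theorem site_mul_site_comm {j k : Fin L} (hjk : j ≠ k)
    (A B : Matrix (Fin (N twoS)) (Fin (N twoS)) ℂ) :
    site twoS L j A * site twoS L k B = site twoS L k B * site twoS L j A := by
  ext x y
  rw [site_mul_site_apply hjk, site_mul_site_apply hjk.symm, mul_comm]
  exact if_congr ⟨fun h i hk hj => h i hj hk, fun h i hj hk => h i hk hj⟩ rfl rfl

theorem SpMat_ne_zero {p q : Fin (N twoS)} (h : SpMat twoS p q ≠ 0) : (p : ℕ) + 1 = q := by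
  by_contra hpq
  simp [SpMat, hpq] at h

theorem SmMat_ne_zero {p q : Fin (N twoS)} (h : SmMat twoS p q ≠ 0) : (p : ℕ) = q + 1 := by
  by_contra hpq
  simp [SmMat, hpq] at h

/-- `∏ᵢ aᵢ^(S - mᵢ)`, the diagonal entry at `x` of the product of the site rotations
`aᵢ^(S - S^z_i)`. -/
def phase (a : Fin L → ℂ) (x : Conf twoS L) : ℂ := ∏ i, a i ^ (x i : ℕ)

theorem phase_ne_zero {a : Fin L → ℂ} (ha : ∀ i, a i ≠ 0) (x : Conf twoS L) :
    phase a x ≠ 0 :=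
  prod_ne_zero_iff.2 fun i _ => pow_ne_zero _ (ha i)

theorem star_phase {a : Fin L → ℂ} (ha : ∀ i, star (a i) = (a i)⁻¹) (x : Conf twoS L) :
    star (phase a x) = (phase a x)⁻¹ := by
  simp only [phase, star_prod, star_pow, ha, inv_pow, prod_inv_distrib]

theorem phase_mul_eq_of_hop (a : Fin L → ℂ) {j k : Fin L} (hjk : j ≠ k) {x y : Conf twoS L}
    (hj : (x j : ℕ) + 1 = y j) (hk : (x k : ℕ) = y k + 1)
    (hoff : ∀ i, i ≠ j → i ≠ k → x i = y i) :
    phase a y * a k = phase a x * a j := by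
  have hsite : ∀ i, a i ^ (y i : ℕ) * (if i = k then a i else 1) =
      a i ^ (x i : ℕ) * (if i = j then a i else 1) := by
    intro i
    by_cases hik : i = k
    · subst hik
      rw [if_pos rfl, if_neg hjk.symm, hk, pow_succ, mul_one]
    · by_cases hij : i = j
      · subst hij
        rw [if_neg hik, if_pos rfl, ← hj, pow_succ, mul_one]
      · rw [if_neg hik, if_neg hij, hoff i hij hik]
  simpa only [phase, prod_mul_distrib, Fintype.prod_ite_eq'] using
    prod_congr rfl fun i (_ : i ∈ univ) => hsite i

theorem conj_phase_site_mul_site {a : Fin L → ℂ} (ha : ∀ i, a i ≠ 0) {j k : Fin L}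
    (hjk : j ≠ k) :
    diagonal (phase a)⁻¹ * (site twoS L j (SpMat twoS) * site twoS L k (SmMat twoS)) *
        diagonal (phase a) =
      (a j / a k) • (site twoS L j (SpMat twoS) * site twoS L k (SmMat twoS)) := by
  refine diagonal_mul_mul_diagonal_eq_smul fun x y hxy => ?_
  rw [site_mul_site_apply hjk] at hxy
  split_ifs at hxy with hoff
  · have hhop := phase_mul_eq_of_hop a hjk (SpMat_ne_zero (left_ne_zero_of_mul hxy))
      (SmMat_ne_zero (right_ne_zero_of_mul hxy)) hoff
    have hx := phase_ne_zero ha x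
    rw [Pi.inv_apply]
    field_simp [ha k]
    linear_combination hhop
  · exact absurd rfl hxy

theorem isDiag_SzT : (SzT twoS L).IsDiag := by
  intro x y hxy
  rw [SzT, Matrix.sum_apply]
  exact sum_eq_zero fun j _ => isDiag_site_diagonal j _ hxy

theorem isDiag_site_SzMat_mul_site_SzMat (j k : Fin L) :
    (site twoS L j (SzMat twoS) * site twoS L k (SzMat twoS)).IsDiag := by
  rw [SzMat, site_diagonal, site_diagonal, diagonal_mul_diagonal]
  exact isDiag_diagonal _

theorem conj_phase_Ham [NeZero L] {a : Fin L → ℂ} (ha : ∀ i, a i ≠ 0) (J Δ : ℕ → ℝ)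
    (h : ℝ) :
    diagonal (phase a)⁻¹ * Ham twoS L J Δ h * diagonal (phase a) =
      (∑ j : Fin L, ∑ r ∈ Icc 1 (L / 2),
        ((((J r : ℝ) : ℂ) / 2) •
          ((a j / a (j + (r : Fin L))) •
              (site twoS L j (SpMat twoS) * site twoS L (j + (r : Fin L)) (SmMat twoS)) +
            (a (j + (r : Fin L)) / a j) •
              (site twoS L j (SmMat twoS) * site twoS L (j + (r : Fin L)) (SpMat twoS))) +
        ((Δ r : ℝ) : ℂ) •
          (site twoS L j (SzMat twoS) * site twoS L (j + (r : Fin L)) (SzMat twoS)))) +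
      (h : ℂ) • SzT twoS L := by
  have hd := phase_ne_zero (twoS := twoS) ha
  unfold Ham
  simp only [Matrix.mul_add, Matrix.add_mul, mul_sum, sum_mul, Matrix.mul_smul,
    Matrix.smul_mul]
  congr 1
  · refine sum_congr rfl fun j _ => sum_congr rfl fun r hr => ?_
    have hjk : j ≠ j + (r : Fin L) := Fin.self_ne_add_natCast j (mem_Icc.1 hr).1
      ((mem_Icc.1 hr).2.trans_lt (Nat.div_lt_self (Nat.pos_of_neZero L) one_lt_two))
    rw [conj_phase_site_mul_site ha hjk, site_mul_site_comm hjk (SmMat twoS),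
      conj_phase_site_mul_site ha hjk.symm, ← site_mul_site_comm hjk,
      (isDiag_site_SzMat_mul_site_SzMat _ _).diagonal_inv_mul_mul_diagonal hd]
  · rw [isDiag_SzT.diagonal_inv_mul_mul_diagonal hd]

theorem SzMat_sub_spin :
    SzMat twoS - ((spin twoS : ℝ) : ℂ) • 1 =
      diagonal fun k : Fin (N twoS) => -((k : ℕ) : ℂ) := by
  ext a b
  by_cases hab : a = b
  · subst hab
    simp [SzMat, mval]
  · simp [SzMat, hab]

theorem twistGen_eq_diagonal [NeZero L] :
    twistGen twoS L = diagonal fun x => -∑ n ∈ Icc 1 L, ((n * (x n : ℕ) : ℕ) : ℂ) := by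
  ext x y
  simp only [twistGen, SzMat_sub_spin, site_diagonal, Matrix.sum_apply,
    Matrix.smul_apply, diagonal_apply]
  split_ifs <;> simp [sum_neg_distrib]

def twistRoot (L : ℕ) (ε : ℝ) : ℂ := Complex.exp (ε * (2 * Real.pi) * Complex.I / L)

theorem twistRoot_ne_zero (ε : ℝ) : twistRoot L ε ≠ 0 := Complex.exp_ne_zero _

theorem twistRoot_pow (ε : ℝ) (r : ℕ) :
    twistRoot L ε ^ r = Complex.exp (ε * (2 * Real.pi) * Complex.I * r / L) := by
  rw [twistRoot, ← Complex.exp_nat_mul]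
  ring_nf

theorem twistRoot_pow_self [NeZero L] (n : ℤ) : twistRoot L n ^ L = 1 := by
  rw [twistRoot_pow, ← Complex.exp_int_mul_two_pi_mul_I n]
  congr 1
  field_simp [Nat.cast_ne_zero.2 (NeZero.ne L)]
  push_cast
  ring

theorem star_twistRoot (ε : ℝ) : star (twistRoot L ε) = (twistRoot L ε)⁻¹ := by
  rw [twistRoot, Complex.star_def, ← Complex.exp_conj, ← Complex.exp_neg]
  congr 1
  simp only [map_div₀, map_mul, Complex.conj_ofReal, Complex.conj_I, map_natCast, map_ofNat]
  ring

theorem Utw_eq_diagonal_phase [NeZero L] {ε : ℝ} (hω : twistRoot L ε ^ L = 1) :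
    Utw twoS L ε = diagonal (phase fun i => twistRoot L ε ^ (i : ℕ)) := by
  rw [Utw, twistGen_eq_diagonal, ← diagonal_smul, exp_diagonal]
  congr 1
  funext x
  rw [Pi.coe_exp, Pi.smul_apply, smul_eq_mul, ← Complex.exp_eq_exp_ℂ]
  have harg : (-(ε : ℂ) * ((2 * Real.pi / L : ℝ) : ℂ) * Complex.I) *
      -∑ n ∈ Icc 1 L, ((n * (x n : ℕ) : ℕ) : ℂ) =
      ∑ n ∈ Icc 1 L,
        ((n * (x n : ℕ) : ℕ) : ℂ) * (ε * (2 * Real.pi) * Complex.I / L) := by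
    rw [mul_neg, mul_sum, ← sum_neg_distrib]
    refine sum_congr rfl fun n _ => ?_
    push_cast
    ring
  rw [harg, Complex.exp_sum]
  simp only [Complex.exp_nat_mul, pow_mul]
  rw [prod_Icc_one_eq_prod_range (by simp [← twistRoot.eq_1, hω]),
    ← Fin.prod_univ_eq_prod_range]
  simp only [Fin.cast_val_eq_self, phase, twistRoot]

theorem Utw_conjTranspose [NeZero L] {ε : ℝ} (hω : twistRoot L ε ^ L = 1) :
    (Utw twoS L ε)ᴴ = diagonal (phase fun i => twistRoot L ε ^ (i : ℕ))⁻¹ := by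
  rw [Utw_eq_diagonal_phase hω, diagonal_conjTranspose]
  congr 1
  funext x
  exact star_phase (fun i => by rw [star_pow, star_twistRoot, inv_pow]) x

theorem twisted_hamiltonian_identity_general (twoS L : ℕ) [NeZero L] (J Δ : ℕ → ℝ) (h : ℝ) :
    ∀ ε : ℝ, (ε = 1 ∨ ε = -1) →
      (Utw twoS L ε)ᴴ * Ham twoS L J Δ h * Utw twoS L ε - Ham twoS L J Δ h =
      ∑ j : Fin L, ∑ r ∈ Finset.Icc 1 (L / 2),
        ((((J r : ℝ) : ℂ) / 2) •
          ((Complex.exp (-(ε : ℂ) * (2 * Real.pi) * Complex.I * (r : ℂ) / (L : ℂ)) - 1) •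
              (site twoS L j (SpMat twoS) * site twoS L (j + (r : Fin L)) (SmMat twoS)) +
            (Complex.exp ((ε : ℂ) * (2 * Real.pi) * Complex.I * (r : ℂ) / (L : ℂ)) - 1) •
              (site twoS L j (SmMat twoS) * site twoS L (j + (r : Fin L)) (SpMat twoS)))) := by
  intro ε hε
  have hω : twistRoot L ε ^ L = 1 := by
    rcases hε with rfl | rfl
    · exact_mod_cast twistRoot_pow_self (L := L) 1
    · exact_mod_cast twistRoot_pow_self (L := L) (-1)
  rw [Utw_conjTranspose hω, Utw_eq_diagonal_phase hω,
    conj_phase_Ham (fun i => pow_ne_zero _ (twistRoot_ne_zero ε)), Ham,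
    add_sub_add_right_eq_sub, ← sum_sub_distrib]
  refine sum_congr rfl fun j _ => ?_
  rw [← sum_sub_distrib]
  refine sum_congr rfl fun r _ => ?_
  have hω0 := pow_ne_zero (j : ℕ) (twistRoot_ne_zero (L := L) ε)
  have hdown : twistRoot L ε ^ (j : ℕ) / twistRoot L ε ^ ((j + (r : Fin L) : Fin L) : ℕ) =
      Complex.exp (-(ε : ℂ) * (2 * Real.pi) * Complex.I * (r : ℂ) / (L : ℂ)) := by
    rw [pow_val_add_natCast hω, div_mul_cancel_left₀ hω0, twistRoot_pow, ← Complex.exp_neg]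
    ring_nf
  have hup : twistRoot L ε ^ ((j + (r : Fin L) : Fin L) : ℕ) / twistRoot L ε ^ (j : ℕ) =
      Complex.exp ((ε : ℂ) * (2 * Real.pi) * Complex.I * (r : ℂ) / (L : ℂ)) := by
    rw [pow_val_add_natCast hω, mul_div_cancel_left₀ _ hω0, twistRoot_pow]
  rw [hdown, hup]
  module

/-- the exact operator identity for the twisted Hamiltonian:
`(U^tw_{±2π})† H U^tw_{±2π} - H` is the purely transverse sum, independent of
`Δ(·)` and `h`. -/
theorem twisted_hamiltonian_identity (twoS L : ℕ) [NeZero L]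
    (hS : 0 < twoS) (hL4 : 4 ≤ L) (hLeven : Even L) (J Δ : ℕ → ℝ) (h : ℝ) :
    ∀ ε : ℝ, (ε = 1 ∨ ε = -1) →
      (Utw twoS L ε)ᴴ * Ham twoS L J Δ h * Utw twoS L ε - Ham twoS L J Δ h =
      ∑ j : Fin L, ∑ r ∈ Finset.Icc 1 (L / 2),
        ((((J r : ℝ) : ℂ) / 2) •
          ((Complex.exp (-(ε : ℂ) * (2 * Real.pi) * Complex.I * (r : ℂ) / (L : ℂ)) - 1) •
              (site twoS L j (SpMat twoS) * site twoS L (j + (r : Fin L)) (SmMat twoS)) +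
            (Complex.exp ((ε : ℂ) * (2 * Real.pi) * Complex.I * (r : ℂ) / (L : ℂ)) - 1) •
              (site twoS L j (SmMat twoS) * site twoS L (j + (r : Fin L)) (SpMat twoS)))) :=
  twisted_hamiltonian_identity_general twoS L J Δ h

end LSM
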